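/- arXiv:2603.16665 — 4 statements merged into one kernel-verified Lean document; each statement's English description precedes it below -/
import Mathlib

section
/- Let X be a finite state space, A ⊆ X nonempty, T a row-stochastic matrix, and W : X × X → ℝ with W(x,y) ≥ 2 for all x,y. Let X' = X ⊕ Z (Z the set of positive-probability transitions) and T' be the augmented transition matrix as in the two-stage construction (T'(x, z_{xy}) = T(x,y), T'(z_{xy}, y) = 1/(W(x,y)−1), T'(z_{xy}, z_{xy}) = 1 − 1/(W(x,y)−1)). Suppose g : X' → ℝ is nonnegative, g = 0 on A ⊆ X ⊆ X', and g satisfies the unweighted hitting-time recursion g(v) = 1 + Σ_{v'} T'(v,v')·g(v') for all v ∉ A. Then the restriction h of g to X satisfies the weighted hitting-time system: h(x) = 0 for x ∈ A and h(x) = Σ_y T(x,y)·(W(x,y) + h(y)) for x ∉ A. -/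
open Finset
open scoped Classical

/-- The augmented transition matrix on `X ⊕ Z`, where `Z` is the set of
positive-probability transitions of `T`. -/
noncomputable def augT {X : Type*} [Fintype X] [DecidableEq X]
    (T : X → X → ℝ) (W : X → X → ℝ) :
    (X ⊕ {z : X × X // 0 < T z.1 z.2}) → (X ⊕ {z : X × X // 0 < T z.1 z.2}) → ℝ
  | Sum.inl _, Sum.inl _ => 0
  | Sum.inl x, Sum.inr z => if z.1.1 = x then T x z.1.2 else 0
  | Sum.inr z, Sum.inl y => if z.1.2 = y then 1 / (W z.1.1 z.1.2 - 1) else 0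
  | Sum.inr z, Sum.inr z' => if z = z' then 1 - 1 / (W z.1.1 z.1.2 - 1) else 0

/-- Any nonnegative solution of the unweighted hitting-time recursion for the augmented
chain `T'` restricts on `X` to a solution of the weighted hitting-time system for
`(T, W, A)`. -/
theorem augmented_solution_restricts {X : Type*} [Fintype X] [DecidableEq X]
    (T : X → X → ℝ) (hT0 : ∀ x y, 0 ≤ T x y) (hT1 : ∀ x, ∑ y, T x y = 1)
    (A : Set X) (hA : A.Nonempty)
    (W : X → X → ℝ) (hW : ∀ x y, 2 ≤ W x y)
    (g : (X ⊕ {z : X × X // 0 < T z.1 z.2}) → ℝ)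
    (hgnn : ∀ v, 0 ≤ g v)
    (hgA : ∀ x ∈ A, g (Sum.inl x) = 0)
    (hgrec : ∀ v ∉ Sum.inl '' A, g v = 1 + ∑ v', augT T W v v' * g v') :
    (∀ x ∈ A, g (Sum.inl x) = 0) ∧
      (∀ x ∉ A, g (Sum.inl x) = ∑ y, T x y * (W x y + g (Sum.inl y))) := by
  have key : ∀ z : {z : X × X // 0 < T z.1 z.2},
      g (Sum.inr z) = g (Sum.inl z.1.2) + (W z.1.1 z.1.2 - 1) := by
    intro z
    have hp : (0:ℝ) < W z.1.1 z.1.2 - 1 := by linarith [hW z.1.1 z.1.2]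
    have hz := hgrec (Sum.inr z) (by simp)
    rw [Fintype.sum_sum_type] at hz
    simp only [augT, ite_mul, zero_mul, Finset.sum_ite_eq, Finset.mem_univ, if_true] at hz
    have hne : W z.1.1 z.1.2 - 1 ≠ 0 := ne_of_gt hp
    field_simp at hz
    nlinarith [hz]
  refine ⟨hgA, fun x hx => ?_⟩
  have hz := hgrec (Sum.inl x) (by simp [hx])
  rw [Fintype.sum_sum_type] at hz
  simp only [augT, ite_mul, zero_mul, key] at hz
  have hsum : (∑ z : {z : X × X // 0 < T z.1 z.2},
      if z.1.1 = x then T x z.1.2 * (g (Sum.inl z.1.2) + (W z.1.1 z.1.2 - 1)) else 0)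
      = ∑ y, T x y * (g (Sum.inl y) + (W x y - 1)) := by
    rw [← Finset.sum_subtype (p := fun p : X × X => 0 < T p.1 p.2)
        (s := Finset.univ.filter (fun p : X × X => 0 < T p.1 p.2))
        (f := fun p => if p.1 = x then T x p.2 * (g (Sum.inl p.2) + (W p.1 p.2 - 1)) else 0)
        (by simp)]
    rw [Finset.sum_filter_of_ne (by
      intro p _ hne
      by_contra hpos
      push_neg at hpos
      have h0 : T p.1 p.2 = 0 := le_antisymm hpos (hT0 _ _)
      apply hne
      by_cases h : p.1 = x
      · rw [if_pos h, ← h, h0, zero_mul]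
      · rw [if_neg h])]
    rw [Fintype.sum_prod_type]
    rw [Finset.sum_eq_single x]
    · simp
    · intro b _ hb
      simp [hb]
    · simp
  rw [hsum] at hz
  simp only [Finset.sum_const_zero, zero_add] at hz
  have h1 := hT1 x
  rw [hz]
  have : ∑ y, T x y * (g (Sum.inl y) + (W x y - 1))
      = (∑ y, T x y * (W x y + g (Sum.inl y))) - ∑ y, T x y := by
    rw [← Finset.sum_sub_distrib]
    apply Finset.sum_congr rfl
    intro y _
    ring
  rw [this, h1]
  ring
end

section
/- Let X be a finite state space, A ⊆ X, T row-stochastic with the property that for every x ∈ X there exists n ≥ 0 with (Tⁿ 1_A)(x) > 0 (reachability of A). If h₁, h₂ : X → ℝ are two solutions of the system h(x) = 0 for x ∈ A, h(x) = 1 + Σ_y T(x,y) h(y) for x ∉ A, then h₁ = h₂. -/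
open Finset

lemma hitting_aux {X : Type*} [Fintype X]
    (T : X → X → ℝ) (hT0 : ∀ x y, 0 ≤ T x y) (hT1 : ∀ x, ∑ y, T x y = 1)
    (A : Set X)
    (hreach : ∀ x : X, ∃ n : ℕ,
      0 < ((fun f : X → ℝ => fun x => ∑ y, T x y * f y)^[n] (A.indicator 1)) x)
    (g : X → ℝ) (hgA : ∀ x ∈ A, g x = 0)
    (hgrec : ∀ x ∉ A, g x = ∑ y, T x y * g y) :
    ∀ x, g x ≤ 0 := by
  intro x
  by_contra hx
  push_neg at hx
  have hne : (univ : Finset X).Nonempty := ⟨x, mem_univ x⟩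
  obtain ⟨x₀, -, hmax⟩ := Finset.exists_max_image univ g hne
  set M := g x₀ with hM
  have hMpos : 0 < M := lt_of_lt_of_le hx (hmax x (mem_univ x))
  have key : ∀ n : ℕ, ∀ z : X, g z = M →
      ((fun f : X → ℝ => fun x => ∑ y, T x y * f y)^[n] (A.indicator 1)) z = 0 := by
    intro n
    induction n with
    | zero =>
      intro z hz
      simp only [Function.iterate_zero, id_eq]
      have hzA : z ∉ A := fun h => by
        have := hgA z h; rw [hz] at this; linarith
      simp [Set.indicator_of_notMem hzA]
    | succ n ih =>
      intro z hz
      have hzA : z ∉ A := fun h => by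
        have := hgA z h; rw [hz] at this; linarith
      have heq : g z = ∑ y, T z y * g y := hgrec z hzA
      have hzero : ∑ y, T z y * (M - g y) = 0 := by
        have : ∑ y, T z y * (M - g y) = (∑ y, T z y) * M - ∑ y, T z y * g y := by
          rw [Finset.sum_mul]
          rw [← Finset.sum_sub_distrib]
          congr 1; ext y; ring
        rw [this, hT1, ← heq, hz]; ring
      have hforce : ∀ y, T z y ≠ 0 → g y = M := by
        intro y hTy
        have hnn : ∀ i ∈ (univ : Finset X), 0 ≤ T z i * (M - g i) := by
          intro i _
          exact mul_nonneg (hT0 z i) (by have := hmax i (mem_univ i); linarith)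
        have := (Finset.sum_eq_zero_iff_of_nonneg hnn).mp hzero y (mem_univ y)
        rcases mul_eq_zero.mp this with h | h
        · exact absurd h hTy
        · linarith
      rw [Function.iterate_succ_apply']
      apply Finset.sum_eq_zero
      intro y _
      by_cases hTy : T z y = 0
      · simp [hTy]
      · rw [ih y (hforce y hTy), mul_zero]
  obtain ⟨n, hn⟩ := hreach x₀
  rw [key n x₀ rfl] at hn
  exact lt_irrefl 0 hn

/-- Uniqueness of solutions of the (unweighted) hitting-time system under the
reachability condition: from every state, `A` is reached with positive probability
in some number of steps. -/
theorem hitting_time_system_unique {X : Type*} [Fintype X]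
    (T : X → X → ℝ) (hT0 : ∀ x y, 0 ≤ T x y) (hT1 : ∀ x, ∑ y, T x y = 1)
    (A : Set X) (hA : A.Nonempty)
    (hreach : ∀ x : X, ∃ n : ℕ,
      0 < ((fun f : X → ℝ => fun x => ∑ y, T x y * f y)^[n] (A.indicator 1)) x)
    (h₁ h₂ : X → ℝ)
    (h₁A : ∀ x ∈ A, h₁ x = 0) (h₁rec : ∀ x ∉ A, h₁ x = 1 + ∑ y, T x y * h₁ y)
    (h₂A : ∀ x ∈ A, h₂ x = 0) (h₂rec : ∀ x ∉ A, h₂ x = 1 + ∑ y, T x y * h₂ y) :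
    h₁ = h₂ := by
  have hle : ∀ x, h₁ x - h₂ x ≤ 0 := by
    apply hitting_aux T hT0 hT1 A hreach
    · intro x hx; rw [h₁A x hx, h₂A x hx]; ring
    · intro x hx
      rw [h₁rec x hx, h₂rec x hx]
      simp only [mul_sub, Finset.sum_sub_distrib]
      ring
  have hge : ∀ x, h₂ x - h₁ x ≤ 0 := by
    apply hitting_aux T hT0 hT1 A hreach
    · intro x hx; rw [h₁A x hx, h₂A x hx]; ring
    · intro x hx
      rw [h₁rec x hx, h₂rec x hx]
      simp only [mul_sub, Finset.sum_sub_distrib]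
      ring
  funext x
  have := hle x
  have := hge x
  linarith
end

section
/- Let X be a finite state space, T row-stochastic, A ⊆ X nonempty, W : X × X → ℝ positive, and suppose the weighted hitting-time system h(x)=0 on A, h(x)=Σ_y T(x,y)(W(x,y)+h(y)) off A has a nonnegative solution, and let h be its minimal nonnegative solution. Let w_M = max_{x,y} W(x,y) and w_m = min_{x,y} W(x,y), and let g be the minimal nonnegative solution of the unweighted system g(x)=0 on A, g(x)=1+Σ_y T(x,y)g(y) off A. Then w_m · g(x) ≤ h(x) ≤ w_M · g(x) for all x ∈ X. -/
open Finset Filter Topology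

lemma exists_fixed_le {X : Type*} [Fintype X]
    (T : X → X → ℝ) (hT0 : ∀ x y, 0 ≤ T x y)
    (A : Set X) (c : X → ℝ) (hc : ∀ x, 0 ≤ c x)
    (B : X → ℝ) (hB : ∀ x, 0 ≤ B x)
    (hBrec : ∀ x ∉ A, c x + ∑ y, T x y * B y ≤ B x) :
    ∃ u : X → ℝ, (∀ x, 0 ≤ u x) ∧ (∀ x ∈ A, u x = 0) ∧
      (∀ x ∉ A, u x = c x + ∑ y, T x y * u y) ∧ ∀ x, u x ≤ B x := by
  classical
  set F : (X → ℝ) → (X → ℝ) :=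
    fun v x => if x ∈ A then 0 else c x + ∑ y, T x y * v y with hF
  have FA : ∀ (v : X → ℝ) x, x ∈ A → F v x = 0 := fun v x hx => if_pos hx
  have FN : ∀ (v : X → ℝ) x, x ∉ A → F v x = c x + ∑ y, T x y * v y :=
    fun v x hx => if_neg hx
  have Fmono : ∀ v w : X → ℝ, (∀ y, v y ≤ w y) → ∀ x, F v x ≤ F w x := by
    intro v w hvw x
    by_cases hx : x ∈ A
    · rw [FA v x hx, FA w x hx]
    · rw [FN v x hx, FN w x hx]
      gcongr with y
      · exact hT0 x y
      · exact hvw y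
  set s : ℕ → X → ℝ := fun n => F^[n] (fun _ => 0) with hs
  have sstep : ∀ n, s (n+1) = F (s n) := fun n => Function.iterate_succ_apply' F n _
  have snn : ∀ n x, 0 ≤ s n x := by
    intro n
    induction n with
    | zero => intro x; simp [s]
    | succ n ih =>
      intro x
      rw [sstep]
      by_cases hx : x ∈ A
      · rw [FA _ x hx]
      · rw [FN _ x hx]
        have : 0 ≤ ∑ y, T x y * s n y :=
          Finset.sum_nonneg fun y _ => mul_nonneg (hT0 x y) (ih y)
        linarith [hc x]
  have sB : ∀ n x, s n x ≤ B x := by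
    intro n
    induction n with
    | zero => intro x; simpa [s] using hB x
    | succ n ih =>
      intro x
      rw [sstep]
      by_cases hx : x ∈ A
      · rw [FA _ x hx]; exact hB x
      · rw [FN _ x hx]
        refine le_trans ?_ (hBrec x hx)
        gcongr with y
        · exact hT0 x y
        · exact ih y
  have smono : ∀ n x, s n x ≤ s (n+1) x := by
    intro n
    induction n with
    | zero =>
      intro x
      rw [sstep]
      have h0 : s 0 x = 0 := rfl
      rw [h0]
      exact snn 1 x |>.trans_eq (by rw [sstep])
    | succ n ih =>
      intro x
      rw [sstep, sstep]
      exact Fmono _ _ ih x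
  have key : ∀ x, Monotone fun n => s n x :=
    fun x => monotone_nat_of_le_succ fun n => smono n x
  have hbdd : ∀ x, BddAbove (Set.range fun n => s n x) :=
    fun x => ⟨B x, by rintro _ ⟨n, rfl⟩; exact sB n x⟩
  set u : X → ℝ := fun x => ⨆ n, s n x with hu
  have hlim : ∀ x, Tendsto (fun n => s n x) atTop (𝓝 (u x)) :=
    fun x => tendsto_atTop_ciSup (key x) (hbdd x)
  have hfix : ∀ x, u x = F u x := by
    intro x
    have h1 : Tendsto (fun n => s (n+1) x) atTop (𝓝 (u x)) :=
      (hlim x).comp (tendsto_add_atTop_nat 1)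
    have h2 : Tendsto (fun n => F (s n) x) atTop (𝓝 (F u x)) := by
      by_cases hx : x ∈ A
      · simp only [FA _ _ hx]; exact tendsto_const_nhds
      · simp only [FN _ _ hx]
        exact tendsto_const_nhds.add
          (tendsto_finset_sum _ fun y _ => tendsto_const_nhds.mul (hlim y))
    have h1' : Tendsto (fun n => F (s n) x) atTop (𝓝 (u x)) := by
      simpa [sstep] using h1
    exact tendsto_nhds_unique h1' h2
  refine ⟨u, ?_, ?_, ?_, ?_⟩
  · intro x
    have := le_ciSup (hbdd x) 0
    simpa [s] using this
  · intro x hx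
    rw [hfix x]; exact FA _ x hx
  · intro x hx
    rw [hfix x]; exact FN _ x hx
  · intro x
    exact ciSup_le fun n => sB n x

/-- The minimal nonnegative solution of the weighted hitting-time system is bounded
between `w_m` and `w_M` times the minimal nonnegative solution of the unweighted one. -/
theorem weighted_hitting_time_bounds {X : Type*} [Fintype X] [Nonempty X]
    (T : X → X → ℝ) (hT0 : ∀ x y, 0 ≤ T x y) (hT1 : ∀ x, ∑ y, T x y = 1)
    (A : Set X) (hA : A.Nonempty)
    (W : X → X → ℝ) (hW : ∀ x y, 0 < W x y)
    (wm wM : ℝ)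
    (hwm : wm = Finset.univ.inf' Finset.univ_nonempty (fun p : X × X => W p.1 p.2))
    (hwM : wM = Finset.univ.sup' Finset.univ_nonempty (fun p : X × X => W p.1 p.2))
    (h : X → ℝ) (hnn : ∀ x, 0 ≤ h x)
    (hA0 : ∀ x ∈ A, h x = 0)
    (hrec : ∀ x ∉ A, h x = ∑ y, T x y * (W x y + h y))
    (hmin : ∀ h' : X → ℝ, (∀ x, 0 ≤ h' x) → (∀ x ∈ A, h' x = 0) →
      (∀ x ∉ A, h' x = ∑ y, T x y * (W x y + h' y)) → ∀ x, h x ≤ h' x)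
    (g : X → ℝ) (gnn : ∀ x, 0 ≤ g x)
    (gA0 : ∀ x ∈ A, g x = 0)
    (grec : ∀ x ∉ A, g x = 1 + ∑ y, T x y * g y)
    (gmin : ∀ g' : X → ℝ, (∀ x, 0 ≤ g' x) → (∀ x ∈ A, g' x = 0) →
      (∀ x ∉ A, g' x = 1 + ∑ y, T x y * g' y) → ∀ x, g x ≤ g' x) :
    ∀ x, wm * g x ≤ h x ∧ h x ≤ wM * g x := by
  have hwm_le : ∀ x y, wm ≤ W x y := by
    intro x y
    rw [hwm]
    exact Finset.inf'_le (fun p : X × X => W p.1 p.2) (Finset.mem_univ (x, y))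
  have hle_wM : ∀ x y, W x y ≤ wM := by
    intro x y
    rw [hwM]
    exact Finset.le_sup' (fun p : X × X => W p.1 p.2) (Finset.mem_univ (x, y))
  have hwm_pos : 0 < wm := by
    rw [hwm]
    exact (Finset.lt_inf'_iff _).mpr fun p _ => hW p.1 p.2
  -- Upper bound: build a fixed point of the weighted system below wM * g.
  have upper : ∀ x, h x ≤ wM * g x := by
    obtain ⟨u, unn, uA, urec, uB⟩ := exists_fixed_le T hT0 A
      (fun x => ∑ y, T x y * W x y)
      (fun x => Finset.sum_nonneg fun y _ => mul_nonneg (hT0 x y) (hW x y).le)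
      (fun x => wM * g x)
      (fun x => mul_nonneg (le_trans (hwm_pos.le) (le_trans (hwm_le x x) (hle_wM x x))) (gnn x))
      (by
        intro x hx
        have h1 : ∑ y, T x y * W x y ≤ wM := by
          calc ∑ y, T x y * W x y ≤ ∑ y, T x y * wM := by
                refine Finset.sum_le_sum fun y _ => ?_
                exact mul_le_mul_of_nonneg_left (hle_wM x y) (hT0 x y)
            _ = wM := by rw [← Finset.sum_mul, hT1, one_mul]
        have h2 : ∑ y, T x y * (wM * g y) = wM * ∑ y, T x y * g y := by
          rw [Finset.mul_sum]; congr 1; ext y; ring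
        show (∑ y, T x y * W x y) + ∑ y, T x y * (wM * g y) ≤ wM * g x
        rw [h2, grec x hx, mul_add, mul_one]
        linarith)
    have hu : ∀ x, h x ≤ u x := by
      refine hmin u unn uA ?_
      intro x hx
      rw [urec x hx, ← Finset.sum_add_distrib]
      exact Finset.sum_congr rfl fun y _ => by ring
    exact fun x => (hu x).trans (uB x)
  -- Lower bound: build a fixed point of the unweighted system below h / wm.
  have lower : ∀ x, wm * g x ≤ h x := by
    obtain ⟨u, unn, uA, urec, uB⟩ := exists_fixed_le T hT0 A
      (fun _ => (1:ℝ)) (fun _ => zero_le_one)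
      (fun x => h x / wm)
      (fun x => div_nonneg (hnn x) hwm_pos.le)
      (by
        intro x hx
        have h1 : wm ≤ ∑ y, T x y * W x y := by
          calc wm = ∑ y, T x y * wm := by rw [← Finset.sum_mul, hT1, one_mul]
            _ ≤ ∑ y, T x y * W x y := Finset.sum_le_sum fun y _ =>
                mul_le_mul_of_nonneg_left (hwm_le x y) (hT0 x y)
        have h2 : ∑ y, T x y * (h y / wm) = (∑ y, T x y * h y) / wm := by
          rw [Finset.sum_div]; congr 1; ext y; ring
        show (1:ℝ) + ∑ y, T x y * (h y / wm) ≤ h x / wm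
        rw [h2, le_div_iff₀ hwm_pos, hrec x hx]
        have h3 : ∑ y, T x y * (W x y + h y)
            = ∑ y, T x y * W x y + ∑ y, T x y * h y := by
          rw [← Finset.sum_add_distrib]
          exact Finset.sum_congr rfl fun y _ => by ring
        have h4 : (1 + (∑ y, T x y * h y) / wm) * wm
            = wm + ∑ y, T x y * h y := by field_simp
        rw [h3, h4]
        linarith)
    have hg : ∀ x, g x ≤ u x := gmin u unn uA urec
    intro x
    have := (hg x).trans (uB x)
    calc wm * g x ≤ wm * (h x / wm) := by
          exact mul_le_mul_of_nonneg_left this hwm_pos.le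
      _ = h x := by field_simp
  exact fun x => ⟨lower x, upper x⟩
end

section
/- Let X be a finite state space, A ⊆ X nonempty, W positive, and 𝒯 a nonempty set of row-stochastic matrices. Suppose h* : X → ℝ is a fixed point of the lower operator 𝐋 (i.e., h* = 0 on A and h*(x) = inf_{T∈𝒯} Σ_y T(x,y)(W(x,y)+h*(y)) for x ∉ A). Then for every T ∈ 𝒯 and every solution h^{T,W} of the weighted system for T (with the same boundary condition on A), if h^{T,W} is the unique solution for T, then h* ≤ h^{T,W} pointwise, provided uniqueness holds via the reachability condition and h* is finite. Consequently h* is a lower bound for inf_{T∈𝒯} h^{T,W}. -/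
open Finset
open scoped Classical

/-- A finite fixed point of the lower weighted operator is dominated by the (unique)
weighted expected hitting time of every `T ∈ 𝒯`, and is hence a lower bound for
`inf_{T ∈ 𝒯} h^{T,W}`. -/
theorem lower_fixed_point_le_hitting_times {X : Type*} [Fintype X]
    (A : Set X) (hA : A.Nonempty)
    (W : X → X → ℝ) (hW : ∀ x y, 0 < W x y)
    (𝒯 : Set (X → X → ℝ)) (h𝒯ne : 𝒯.Nonempty)
    (hstoch : ∀ T ∈ 𝒯, (∀ x y, 0 ≤ T x y) ∧ ∀ x, ∑ y, T x y = 1)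
    (hreach : ∀ T ∈ 𝒯, ∀ x : X, ∃ n : ℕ,
      0 < ((fun f : X → ℝ => fun x => ∑ y, T x y * f y)^[n] (A.indicator 1)) x)
    (hstar : X → ℝ)
    (hstarA : ∀ x ∈ A, hstar x = 0)
    (hstarfix : ∀ x ∉ A,
      hstar x = sInf {v : ℝ | ∃ T ∈ 𝒯, v = ∑ y, T x y * (W x y + hstar y)}) :
    ∀ T ∈ 𝒯, ∀ hT : X → ℝ,
      (∀ x ∈ A, hT x = 0) →
      (∀ x ∉ A, hT x = ∑ y, T x y * (W x y + hT y)) →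
      (∀ h' : X → ℝ, (∀ x ∈ A, h' x = 0) →
        (∀ x ∉ A, h' x = ∑ y, T x y * (W x y + h' y)) → h' = hT) →
      ∀ x, hstar x ≤ hT x := by
  intro T hT𝒯 hT hTA hTfix _huniq
  obtain ⟨Tnn, Trow⟩ := hstoch T hT𝒯
  have hXne : Nonempty X := ⟨hA.choose⟩
  set g : X → ℝ := fun x => hstar x - hT x with hg
  -- subinvariance of g off A
  have key : ∀ x ∉ A, g x ≤ ∑ y, T x y * g y := by
    intro x hx
    have hbdd : BddBelow {v : ℝ | ∃ T' ∈ 𝒯, v = ∑ y, T' x y * (W x y + hstar y)} := by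
      refine ⟨Finset.univ.inf' Finset.univ_nonempty (fun y => W x y + hstar y), ?_⟩
      rintro v ⟨T', hT', rfl⟩
      obtain ⟨T'nn, T'row⟩ := hstoch T' hT'
      calc Finset.univ.inf' Finset.univ_nonempty (fun y => W x y + hstar y)
          = ∑ y, T' x y * Finset.univ.inf' Finset.univ_nonempty (fun y => W x y + hstar y) := by
            rw [← Finset.sum_mul, T'row, one_mul]
        _ ≤ ∑ y, T' x y * (W x y + hstar y) := by
            apply Finset.sum_le_sum; intro y _
            exact mul_le_mul_of_nonneg_left (Finset.inf'_le _ (Finset.mem_univ y)) (T'nn x y)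
    have h1 : hstar x ≤ ∑ y, T x y * (W x y + hstar y) := by
      rw [hstarfix x hx]
      exact csInf_le hbdd ⟨T, hT𝒯, rfl⟩
    have h2 : hT x = ∑ y, T x y * (W x y + hT y) := hTfix x hx
    have h3 : g x ≤ ∑ y, T x y * (W x y + hstar y) - ∑ y, T x y * (W x y + hT y) := by
      simp only [hg]; linarith
    calc g x ≤ _ := h3
      _ = ∑ y, T x y * g y := by
          rw [← Finset.sum_sub_distrib]
          exact Finset.sum_congr rfl fun y _ => by simp only [hg]; ring
  -- maximum of g
  obtain ⟨x0, -, hx0max⟩ :=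
    Finset.exists_max_image (Finset.univ : Finset X) g ⟨Classical.arbitrary X, Finset.mem_univ _⟩
  set M : ℝ := g x0 with hM
  have hgle : ∀ x, g x ≤ M := fun x => hx0max x (Finset.mem_univ x)
  have hMle : M ≤ 0 := by
    by_contra hMpos
    push_neg at hMpos
    have claim : ∀ n : ℕ, ∀ x : X,
        0 < ((fun f : X → ℝ => fun x => ∑ y, T x y * f y)^[n] (A.indicator 1)) x → g x < M := by
      intro n
      induction n with
      | zero =>
        intro x hx
        simp only [Function.iterate_zero, id_eq] at hx
        have hxA : x ∈ A := by
          by_contra hxA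
          rw [Set.indicator_of_notMem hxA] at hx
          exact lt_irrefl 0 hx
        have : g x = 0 := by simp [hg, hstarA x hxA, hTA x hxA]
        rw [this]; exact hMpos
      | succ n ih =>
        intro x hx
        rw [Function.iterate_succ_apply'] at hx
        -- find y with T x y > 0 and iterate value positive
        have hex : ∃ y : X, 0 < T x y *
            ((fun f : X → ℝ => fun x => ∑ y, T x y * f y)^[n] (A.indicator 1)) y := by
          by_contra hc
          push_neg at hc
          have : (∑ y, T x y *
              ((fun f : X → ℝ => fun x => ∑ y, T x y * f y)^[n] (A.indicator 1)) y) ≤ 0 :=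
            Finset.sum_nonpos fun y _ => hc y
          exact absurd hx (not_lt.mpr this)
        obtain ⟨y, hy⟩ := hex
        have hTxy : 0 < T x y := by
          rcases (Tnn x y).lt_or_eq with h | h
          · exact h
          · exfalso; rw [← h, zero_mul] at hy; exact lt_irrefl 0 hy
        have hvy : 0 < ((fun f : X → ℝ => fun x => ∑ y, T x y * f y)^[n] (A.indicator 1)) y := by
          nlinarith
        have hgy : g y < M := ih y hvy
        rcases (hgle x).lt_or_eq with h | hgx
        · exact h
        exfalso
        have hxA : x ∉ A := by
          intro hxA
          have : g x = 0 := by simp [hg, hstarA x hxA, hTA x hxA]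
          rw [this] at hgx; exact absurd hgx.symm (ne_of_gt hMpos)
        have hkey := key x hxA
        rw [hgx] at hkey
        have hsum : ∑ z, T x z * (M - g z) ≤ 0 := by
          have : ∑ z, T x z * (M - g z) = (∑ z, T x z) * M - ∑ z, T x z * g z := by
            rw [Finset.sum_mul, ← Finset.sum_sub_distrib]
            exact Finset.sum_congr rfl fun z _ => by ring
          rw [this, Trow, one_mul]; linarith
        have hterm : 0 < T x y * (M - g y) := mul_pos hTxy (by linarith)
        have hsingle : T x y * (M - g y) ≤ ∑ z, T x z * (M - g z) :=
          Finset.single_le_sum (f := fun z => T x z * (M - g z))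
            (fun z _ => mul_nonneg (Tnn x z) (by linarith [hgle z])) (Finset.mem_univ y)
        linarith
    obtain ⟨n, hn⟩ := hreach T hT𝒯 x0
    exact absurd (claim n x0 hn) (lt_irrefl M)
  intro x
  have := le_trans (hgle x) hMle
  simp only [hg] at this
  linarith
end
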